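/- Let (k_n)_{n≥1} be a sequence of positive integers. Suppose that for every nonincreasing sequence (d_i)_{i≥1} of strictly positive real numbers converging to zero, the diagonal operator diag(d) can be written as diag(d) = C∘Z − Z∘C where C is a compact operator, Z is a bounded operator, and at least one of C, Z is block tridiagonal with central block sizes k_n. Then there exist ρ > 1 and c > 0 such that k_n ≥ c·ρ^n for all n ≥ 1. -/

import Mathlib

open Filter

variable {H : Type*} [NormedAddCommGroup H] [InnerProductSpace ℂ H] [CompleteSpace H]

/-- Partial sums `s n = k 1 + ⋯ + k n` of a sequence of block sizes (with `s 0 = 0`). -/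
def psum (k : ℕ → ℕ) (n : ℕ) : ℕ := ∑ j ∈ Finset.Icc 1 n, k j

/-- The block index `b i` of an index `i ≥ 1`: the unique `n` with `s (n-1) < i ≤ s n`
(realized as the least `n` with `i ≤ s n`). -/
noncomputable def blockIdx (k : ℕ → ℕ) (i : ℕ) : ℕ := sInf {n | i ≤ psum k n}

/-- A bounded operator `W` is block tridiagonal with central block sizes `k n` if
`⟪e i, W (e j)⟫ = 0` whenever `|b i - b j| ≥ 2`. -/
def IsBlockTridiagonal (e : HilbertBasis ℕ+ ℂ H) (k : ℕ → ℕ) (W : H →L[ℂ] H) : Prop :=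
  ∀ i j : ℕ+, 2 ≤ |(blockIdx k (i : ℕ) : ℤ) - (blockIdx k (j : ℕ) : ℤ)| →
    (inner ℂ (e i) (W (e j)) : ℂ) = 0

/-- The orthogonal projection `P n` onto `span {e i : s (n-1) < i ≤ s n}`. -/
noncomputable def blockProj (e : HilbertBasis ℕ+ ℂ H) (k : ℕ → ℕ) (n : ℕ) : H →L[ℂ] H :=
  ∑ i ∈ (Finset.Ioc (psum k (n - 1)) (psum k n)).attach,
    (innerSL ℂ (e ⟨i.1, Nat.lt_of_le_of_lt (Nat.zero_le _) (Finset.mem_Ioc.mp i.2).1⟩)).smulRight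
      (e ⟨i.1, Nat.lt_of_le_of_lt (Nat.zero_le _) (Finset.mem_Ioc.mp i.2).1⟩)

/-- The partial trace `∑_{j=1}^m ⟪e j, T (e j)⟫`. -/
noncomputable def ptrace (e : HilbertBasis ℕ+ ℂ H) (T : H →L[ℂ] H) (m : ℕ) : ℂ :=
  ∑ i ∈ (Finset.Icc 1 m).attach,
    (inner ℂ (e ⟨i.1, (Finset.mem_Icc.mp i.2).1⟩) (T (e ⟨i.1, (Finset.mem_Icc.mp i.2).1⟩)) : ℂ)

/-- The upper off-diagonal block `A n (W) = P n ∘ W ∘ P (n+1)`. -/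
noncomputable def blockA (e : HilbertBasis ℕ+ ℂ H) (k : ℕ → ℕ) (n : ℕ) (W : H →L[ℂ] H) :
    H →L[ℂ] H :=
  blockProj e k n ∘L W ∘L blockProj e k (n + 1)

/-- The lower off-diagonal block `B n (W) = P (n+1) ∘ W ∘ P n`. -/
noncomputable def blockB (e : HilbertBasis ℕ+ ℂ H) (k : ℕ → ℕ) (n : ℕ) (W : H →L[ℂ] H) :
    H →L[ℂ] H :=
  blockProj e k (n + 1) ∘L W ∘L blockProj e k n

/-!
For a block tridiagonal `W`, the partial trace of `W V - V W` over the first `s (n + 1)` basis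
vectors reduces, after the square part cancels, to the entries joining block `n + 1` to block
`n + 2`, so it is at most `2 k (n + 1) ‖W‖ ‖V‖`. For `d` constant on blocks, equal to `δ n` on
block `n + 1`, that partial trace of `diag d` is at least `δ n s (n + 1)`. So every nonincreasing
positive null `δ` satisfies `δ n ≤ M r n` with `r n = k (n + 1) / s (n + 1)`. Testing this against
`δ = √μ`, where `μ` is the running minimum of `r`, shows that `r ≥ a > 0`; then
`s n ≤ (1 - a) s (n + 1)`, so the partial sums, and with them `k n ≥ a s n`, grow exponentially.
-/

open Finset

theorem Orthonormal.norm_sum_inner_mul_inner_le {𝕜 E ι : Type*} [RCLike 𝕜]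
    [SeminormedAddCommGroup E] [InnerProductSpace 𝕜 E] {v : ι → E} (hv : Orthonormal 𝕜 v)
    (s : Finset ι) (x y : E) :
    ‖∑ i ∈ s, inner 𝕜 x (v i) * inner 𝕜 (v i) y‖ ≤ ‖x‖ * ‖y‖ := by
  calc ‖∑ i ∈ s, inner 𝕜 x (v i) * inner 𝕜 (v i) y‖
      ≤ ∑ i ∈ s, ‖inner 𝕜 (v i) x‖ * ‖inner 𝕜 (v i) y‖ := by
        refine (norm_sum_le _ _).trans_eq (sum_congr rfl fun i _ => ?_)
        rw [norm_mul, norm_inner_symm]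
    _ ≤ ‖x‖ * ‖y‖ := by
        refine (pow_le_pow_iff_left₀ (by positivity) (by positivity) two_ne_zero).1 ?_
        calc (∑ i ∈ s, ‖inner 𝕜 (v i) x‖ * ‖inner 𝕜 (v i) y‖) ^ 2
            ≤ (∑ i ∈ s, ‖inner 𝕜 (v i) x‖ ^ 2) * ∑ i ∈ s, ‖inner 𝕜 (v i) y‖ ^ 2 :=
              sum_mul_sq_le_sq_mul_sq _ _ _
          _ ≤ ‖x‖ ^ 2 * ‖y‖ ^ 2 := by
              gcongr
              exacts [hv.sum_inner_products_le x, hv.sum_inner_products_le y]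
          _ = (‖x‖ * ‖y‖) ^ 2 := (mul_pow _ _ _).symm

theorem Finset.sum_sum_mul_sub_mul_eq_sum_sdiff {ι R : Type*} [DecidableEq ι] [CommRing R]
    (a b : ι → ι → R) {I J : Finset ι} (hIJ : I ⊆ J) :
    ∑ i ∈ I, ∑ j ∈ J, (a i j * b j i - b i j * a j i)
      = ∑ i ∈ I, ∑ j ∈ J \ I, (a i j * b j i - b i j * a j i) := by
  have hdiag : ∑ i ∈ I, ∑ j ∈ I, (a i j * b j i - b i j * a j i) = 0 := by
    simp only [sum_sub_distrib]
    rw [sub_eq_zero, sum_comm]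
    exact sum_congr rfl fun i _ => sum_congr rfl fun j _ => mul_comm _ _
  simp only [← sum_sdiff hIJ, sum_add_distrib, hdiag, add_zero]

theorem exists_pos_le_of_forall_antitone_le_mul {r : ℕ → ℝ} (hr : ∀ n, 0 < r n)
    (h : ∀ δ : ℕ → ℝ, Antitone δ → (∀ n, 0 < δ n) → Tendsto δ atTop (nhds 0) →
      ∃ M, ∀ n, δ n ≤ M * r n) :
    ∃ a, 0 < a ∧ ∀ n, a ≤ r n := by
  by_contra! hsmall
  let μ n := (range (n + 1)).inf' nonempty_range_add_one r
  have hμ_le {m n : ℕ} (hmn : m ≤ n) : μ n ≤ r m := inf'_le _ (mem_range.2 (by omega))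
  have hμ_attained (n : ℕ) : ∃ m ≤ n, μ n = r m := by
    obtain ⟨m, hm, hμm⟩ := exists_mem_eq_inf' nonempty_range_add_one r
    exact ⟨m, Nat.lt_succ_iff.1 (mem_range.1 hm), hμm⟩
  have hμ_pos (n : ℕ) : 0 < μ n := by
    obtain ⟨m, -, hm⟩ := hμ_attained n
    exact hm ▸ hr m
  have hμ_anti : Antitone μ := fun m n hmn =>
    inf'_mono r (range_subset_range.2 (by omega)) nonempty_range_add_one
  have hμ_lim : Tendsto μ atTop (nhds 0) := by
    refine tendsto_order.2 ⟨fun a ha => Eventually.of_forall fun n => ha.trans (hμ_pos n),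
      fun a ha => ?_⟩
    obtain ⟨m, hm⟩ := hsmall a ha
    exact eventually_atTop.2 ⟨m, fun n hn => (hμ_le hn).trans_lt hm⟩
  -- `√μ` is an admissible `δ` with `√μ n / μ n → ∞`
  obtain ⟨M, hM⟩ := h (fun n => √(μ n)) (fun m n hmn => Real.sqrt_le_sqrt (hμ_anti hmn))
    (fun n => Real.sqrt_pos.2 (hμ_pos n))
    (by simpa [Function.comp_def] using (Real.continuous_sqrt.tendsto 0).comp hμ_lim)
  have hsqrt (n : ℕ) : √(μ n) ≤ M * μ n := by
    obtain ⟨m, hmn, hm⟩ := hμ_attained n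
    calc √(μ n) ≤ √(μ m) := Real.sqrt_le_sqrt (hμ_anti hmn)
      _ ≤ M * r m := hM m
      _ = M * μ n := by rw [hm]
  have hM : 0 < M := by nlinarith [hsqrt 0, Real.sqrt_pos.2 (hμ_pos 0), hμ_pos 0]
  obtain ⟨n, hn⟩ := hsmall (M⁻¹ ^ 2) (by positivity)
  have hs := Real.sqrt_pos.2 (hμ_pos n)
  have hsq := Real.sq_sqrt (hμ_pos n).le
  have h1 : 1 ≤ M * √(μ n) := by nlinarith [hsqrt n]
  have h2 : √(μ n) < M⁻¹ := by
    rw [← Real.sqrt_sq (inv_pos.2 hM).le]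
    exact Real.sqrt_lt_sqrt (hμ_pos n).le ((hμ_le le_rfl).trans_lt hn)
  nlinarith [mul_inv_cancel₀ hM.ne']

theorem psum_mono (k : ℕ → ℕ) : Monotone (psum k) := fun _ _ h =>
  sum_le_sum_of_subset (Icc_subset_Icc_right h)

theorem psum_succ (k : ℕ → ℕ) (n : ℕ) : psum k (n + 1) = psum k n + k (n + 1) :=
  sum_Icc_succ_top (Nat.le_add_left 1 n) k

theorem psum_one (k : ℕ → ℕ) : psum k 1 = k 1 := by simp [psum]

section Blocks

variable {k : ℕ → ℕ}

theorem le_psum (hk : ∀ n, 1 ≤ n → 1 ≤ k n) (n : ℕ) : n ≤ psum k n := by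
  simpa [psum] using card_nsmul_le_sum (Icc 1 n) k 1 fun j hj => hk j (mem_Icc.1 hj).1

theorem blockIdx_le_iff (hk : ∀ n, 1 ≤ n → 1 ≤ k n) {i n : ℕ} :
    blockIdx k i ≤ n ↔ i ≤ psum k n :=
  ⟨fun h => (Nat.sInf_mem (s := {m | i ≤ psum k m}) ⟨i, le_psum hk i⟩).trans (psum_mono k h),
    fun h => Nat.sInf_le h⟩

theorem lt_blockIdx_iff (hk : ∀ n, 1 ≤ n → 1 ≤ k n) {i n : ℕ} :
    n < blockIdx k i ↔ psum k n < i := by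
  simpa using (blockIdx_le_iff hk).not

theorem blockIdx_mono (hk : ∀ n, 1 ≤ n → 1 ≤ k n) : Monotone (blockIdx k) := fun _ _ h =>
  (blockIdx_le_iff hk).2 (h.trans ((blockIdx_le_iff hk).1 le_rfl))

theorem tendsto_blockIdx (hk : ∀ n, 1 ≤ n → 1 ≤ k n) : Tendsto (blockIdx k) atTop atTop :=
  tendsto_atTop_atTop.2 fun n => ⟨psum k n + 1, fun _ hi => ((lt_blockIdx_iff hk).2 hi).le⟩

end Blocks

theorem exists_exp_le_of_mul_psum_le {k : ℕ → ℕ} (hk1 : 1 ≤ k 1) {a : ℝ} (ha : 0 < a)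
    (h : ∀ n, a * psum k (n + 1) ≤ k (n + 1)) :
    ∃ ρ c : ℝ, 1 < ρ ∧ 0 < c ∧ ∀ n, 1 ≤ n → c * ρ ^ n ≤ (k n : ℝ) := by
  set b := min a 2⁻¹
  have hb : 0 < b := lt_min ha (by norm_num)
  have hb1 : b < 1 := (min_le_right _ _).trans_lt (by norm_num)
  have hbk (n : ℕ) : b * psum k (n + 1) ≤ k (n + 1) :=
    (mul_le_mul_of_nonneg_right (min_le_left _ _) (Nat.cast_nonneg _)).trans (h n)
  set ρ := (1 - b)⁻¹
  have hρ : 1 < ρ := (one_lt_inv₀ (by linarith)).2 (by linarith)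
  -- `s (n + 1) = s n + k (n + 1) ≥ s n + b s (n + 1)`, so the partial sums grow by the factor `ρ`
  have hgrowth (n : ℕ) : ρ ^ n * psum k 1 ≤ psum k (n + 1) := by
    refine geom_le (u := fun n => (psum k (n + 1) : ℝ)) (by positivity) n fun m _ => ?_
    have hsucc : (psum k (m + 2) : ℝ) = psum k (m + 1) + k (m + 2) := by
      exact_mod_cast psum_succ k (m + 1)
    rw [inv_mul_le_iff₀ (by linarith)]
    linarith [hbk (m + 1)]
  refine ⟨ρ, b / ρ, hρ, by positivity, fun n hn => ?_⟩
  obtain ⟨n, rfl⟩ := Nat.exists_eq_add_of_le' hn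
  have hs1 : (1 : ℝ) ≤ psum k 1 := by exact_mod_cast (psum_one k).symm ▸ hk1
  calc b / ρ * ρ ^ (n + 1) = b * (ρ ^ n * 1) := by
        field_simp
        ring
    _ ≤ b * psum k (n + 1) := by
        gcongr
        exact (mul_le_mul_of_nonneg_left hs1 (by positivity)).trans (hgrowth n)
    _ ≤ k (n + 1) := hbk n

def pnatIcc (m : ℕ) : Finset ℕ+ := (Icc 1 m).subtype (0 < ·)

@[simp]
theorem mem_pnatIcc {m : ℕ} {i : ℕ+} : i ∈ pnatIcc m ↔ (i : ℕ) ≤ m :=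
  mem_subtype.trans (mem_Icc.trans (and_iff_right i.pos))

@[simp]
theorem card_pnatIcc (m : ℕ) : #(pnatIcc m) = m := by
  refine (card_subtype _ _).trans ?_
  rw [filter_true_of_mem (p := (0 < ·)) fun n hn => (mem_Icc.1 hn).1, Nat.card_Icc,
    Nat.add_sub_cancel]

theorem pnatIcc_mono : Monotone pnatIcc := fun _ _ h _ hi =>
  mem_pnatIcc.2 ((mem_pnatIcc.1 hi).trans h)

section HilbertBasis

variable {E : Type*} [NormedAddCommGroup E] [InnerProductSpace ℂ E] (e : HilbertBasis ℕ+ ℂ E)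

theorem ptrace_eq_sum (T : E →L[ℂ] E) (m : ℕ) :
    ptrace e T m = ∑ i ∈ pnatIcc m, inner ℂ (e i) (T (e i)) := by
  refine sum_bij (fun i _ => ⟨i.1, (mem_Icc.1 i.2).1⟩) (fun i _ => ?_) (fun _ _ _ _ h => ?_)
    (fun i hi => ?_) (fun _ _ => rfl)
  · exact mem_pnatIcc.2 (mem_Icc.1 i.2).2
  · exact Subtype.ext (congrArg PNat.val h)
  · exact ⟨⟨i, mem_Icc.2 ⟨i.pos, mem_pnatIcc.1 hi⟩⟩, mem_attach _ _, rfl⟩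

theorem ptrace_neg (T : E →L[ℂ] E) (m : ℕ) : ptrace e (-T) m = -ptrace e T m := by
  simp [ptrace_eq_sum]

theorem ptrace_eq_sum_of_apply_eq_smul {D : E →L[ℂ] E} {d : ℕ → ℝ}
    (hD : ∀ i : ℕ+, D (e i) = (d i : ℂ) • e i) (m : ℕ) :
    ptrace e D m = ((∑ i ∈ pnatIcc m, d i : ℝ) : ℂ) := by
  simp [ptrace_eq_sum, hD, e.orthonormal.1]

theorem inner_comp_eq_sum [CompleteSpace E] (W V : E →L[ℂ] E) (x y : E) {J : Finset ℕ+}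
    (hJ : ∀ j ∉ J, inner ℂ x (W (e j)) * inner ℂ (e j) (V y) = 0) :
    inner ℂ x ((W ∘L V) y) = ∑ j ∈ J, inner ℂ x (W (e j)) * inner ℂ (e j) (V y) := by
  rw [ContinuousLinearMap.comp_apply, ← W.adjoint_inner_left, ← e.tsum_inner_mul_inner]
  simp only [W.adjoint_inner_left]
  exact tsum_eq_sum hJ

theorem norm_sum_inner_apply_mul_inner_apply_le [CompleteSpace E] (W V : E →L[ℂ] E) (i : ℕ+)
    (F : Finset ℕ+) :
    ‖∑ j ∈ F, inner ℂ (e i) (W (e j)) * inner ℂ (e j) (V (e i))‖ ≤ ‖W‖ * ‖V‖ := by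
  simp only [← W.adjoint_inner_left]
  refine (e.orthonormal.norm_sum_inner_mul_inner_le F _ _).trans ?_
  have hunit : ‖e i‖ ≤ 1 := (e.orthonormal.1 i).le
  gcongr
  · exact ((ContinuousLinearMap.adjoint W).unit_le_opNorm _ hunit).trans_eq
      (ContinuousLinearMap.adjoint.norm_map W)
  · exact V.unit_le_opNorm _ hunit

variable {k : ℕ → ℕ}

theorem IsBlockTridiagonal.inner_eq_zero {e : HilbertBasis ℕ+ ℂ E} {W : E →L[ℂ] E}
    (hW : IsBlockTridiagonal e k W) (hk : ∀ n, 1 ≤ n → 1 ≤ k n) {n : ℕ} {i j : ℕ+}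
    (hi : (i : ℕ) ≤ psum k n) (hj : psum k (n + 1) < j) :
    inner ℂ (e i) (W (e j)) = 0 ∧ inner ℂ (e j) (W (e i)) = 0 := by
  have hbi := (blockIdx_le_iff hk).2 hi
  have hbj := (lt_blockIdx_iff hk).2 hj
  exact ⟨hW _ _ (le_abs.2 (Or.inr (by omega))), hW _ _ (le_abs.2 (Or.inl (by omega)))⟩

theorem norm_ptrace_commutator_le [CompleteSpace E] (hk : ∀ n, 1 ≤ n → 1 ≤ k n) {W : E →L[ℂ] E}
    (hW : IsBlockTridiagonal e k W) (V : E →L[ℂ] E) (n : ℕ) :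
    ‖ptrace e (W ∘L V - V ∘L W) (psum k (n + 1))‖ ≤ 2 * k (n + 1) * (‖W‖ * ‖V‖) := by
  set I := pnatIcc (psum k (n + 1))
  set J := pnatIcc (psum k (n + 2))
  set B := I \ pnatIcc (psum k n)
  let w i j := inner ℂ (e i) (W (e j))
  let v i j := inner ℂ (e i) (V (e j))
  have hexpand : ptrace e (W ∘L V - V ∘L W) (psum k (n + 1))
      = ∑ i ∈ I, ∑ j ∈ J, (w i j * v j i - v i j * w j i) := by
    rw [ptrace_eq_sum]
    refine sum_congr rfl fun i hi => ?_
    have hfar (j : ℕ+) (hj : j ∉ J) :=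
      hW.inner_eq_zero hk (mem_pnatIcc.1 hi) (by simpa [J] using hj)
    rw [sub_apply, inner_sub_right,
      inner_comp_eq_sum e W V _ _ (J := J) fun j hj => by simp [(hfar j hj).1],
      inner_comp_eq_sum e V W _ _ (J := J) fun j hj => by simp [(hfar j hj).2], ← sum_sub_distrib]
  -- only the rows of the `(n + 1)`-st block reach beyond the first `s (n + 1)` columns
  have hblock : ∀ i ∈ I, i ∉ B → ∑ j ∈ J \ I, (w i j * v j i - v i j * w j i) = 0 := by
    intro i hiI hiB
    have hi : (i : ℕ) ≤ psum k n := by simpa [B, hiI] using hiB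
    refine sum_eq_zero fun j hj => ?_
    have hj : psum k (n + 1) < j := by simpa [I] using (mem_sdiff.1 hj).2
    obtain ⟨h1, h2⟩ := hW.inner_eq_zero hk hi hj
    simp [w, h1, h2]
  have hcard : #B = k (n + 1) := by
    rw [card_sdiff_of_subset (pnatIcc_mono (psum_mono k n.le_succ)), card_pnatIcc, card_pnatIcc,
      psum_succ]
    omega
  rw [hexpand, sum_sum_mul_sub_mul_eq_sum_sdiff w v (pnatIcc_mono (psum_mono k (n + 1).le_succ)),
    ← sum_subset sdiff_subset hblock]
  calc ‖∑ i ∈ B, ∑ j ∈ J \ I, (w i j * v j i - v i j * w j i)‖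
      ≤ ∑ i ∈ B, 2 * (‖W‖ * ‖V‖) := by
        refine norm_sum_le_of_le B fun i _ => ?_
        rw [sum_sub_distrib]
        refine (norm_sub_le _ _).trans ?_
        linarith [norm_sum_inner_apply_mul_inner_apply_le e W V i (J \ I),
          norm_sum_inner_apply_mul_inner_apply_le e V W i (J \ I), mul_comm ‖W‖ ‖V‖]
    _ = 2 * k (n + 1) * (‖W‖ * ‖V‖) := by
        rw [sum_const, hcard, nsmul_eq_mul]
        ring

theorem norm_ptrace_commutator_le_of_or [CompleteSpace E] (hk : ∀ n, 1 ≤ n → 1 ≤ k n)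
    {C Z : E →L[ℂ] E} (hCZ : IsBlockTridiagonal e k C ∨ IsBlockTridiagonal e k Z) (n : ℕ) :
    ‖ptrace e (C ∘L Z - Z ∘L C) (psum k (n + 1))‖ ≤ 2 * k (n + 1) * (‖C‖ * ‖Z‖) := by
  rcases hCZ with hC | hZ
  · exact norm_ptrace_commutator_le e hk hC Z n
  · rw [← neg_sub, ptrace_neg, norm_neg, mul_comm ‖C‖]
    exact norm_ptrace_commutator_le e hk hZ C n

theorem mul_psum_le_norm_ptrace (hk : ∀ n, 1 ≤ n → 1 ≤ k n) {δ : ℕ → ℝ} (hδ : Antitone δ)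
    {D : E →L[ℂ] E} (hD : ∀ i : ℕ+, D (e i) = (δ (blockIdx k i - 1) : ℂ) • e i) (n : ℕ) :
    δ n * psum k (n + 1) ≤ ‖ptrace e D (psum k (n + 1))‖ := by
  rw [ptrace_eq_sum_of_apply_eq_smul e (d := fun i => δ (blockIdx k i - 1)) hD, Complex.norm_real]
  refine le_trans ?_ (Real.le_norm_self _)
  have := card_nsmul_le_sum (pnatIcc (psum k (n + 1))) (fun i : ℕ+ => δ (blockIdx k i - 1)) (δ n)
    fun i hi => hδ (by have := (blockIdx_le_iff hk).2 (mem_pnatIcc.1 hi); omega)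
  simpa [mul_comm] using this

end HilbertBasis

/-- If every nonincreasing strictly positive null sequence `(d i)_{i ≥ 1}`
gives a diagonal operator `diag d` which is a commutator `CZ - ZC` with `C` compact, `Z`
bounded, and at least one of `C, Z` block tridiagonal with central block sizes `k n`, then
`k n` grows at least exponentially: `k n ≥ c * ρ^n` for some `ρ > 1`, `c > 0`. -/
theorem exponential_block_growth_required
    (e : HilbertBasis ℕ+ ℂ H) (k : ℕ → ℕ) (hk : ∀ n, 1 ≤ n → 1 ≤ k n)
    (h : ∀ d : ℕ → ℝ, (∀ i, 1 ≤ i → 0 < d i) → (∀ i, 1 ≤ i → d (i + 1) ≤ d i) →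
      Tendsto d atTop (nhds 0) →
      ∃ C Z D : H →L[ℂ] H, (∀ i : ℕ+, D (e i) = (d (i : ℕ) : ℂ) • e i) ∧
        IsCompactOperator (⇑C) ∧
        (IsBlockTridiagonal e k C ∨ IsBlockTridiagonal e k Z) ∧
        D = C ∘L Z - Z ∘L C) :
    ∃ ρ c : ℝ, 1 < ρ ∧ 0 < c ∧ ∀ n, 1 ≤ n → c * ρ ^ n ≤ (k n : ℝ) := by
  have hs (n : ℕ) : (0 : ℝ) < psum k (n + 1) := by
    exact_mod_cast n.succ_pos.trans_le (le_psum hk (n + 1))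
  obtain ⟨a, ha, hra⟩ := exists_pos_le_of_forall_antitone_le_mul
    (r := fun n => (k (n + 1) : ℝ) / psum k (n + 1))
    (fun n => div_pos (by exact_mod_cast hk (n + 1) (Nat.le_add_left 1 n)) (hs n))
    fun δ hδ hδpos hδlim => by
      obtain ⟨C, Z, D, hD, -, hCZ, rfl⟩ := h (fun i => δ (blockIdx k i - 1))
        (fun _ _ => hδpos _) (fun i _ => hδ (Nat.sub_le_sub_right (blockIdx_mono hk i.le_succ) 1))
        (hδlim.comp ((tendsto_sub_atTop_nat 1).comp (tendsto_blockIdx hk)))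
      refine ⟨2 * (‖C‖ * ‖Z‖), fun n => ?_⟩
      rw [mul_div_assoc', le_div_iff₀ (hs n)]
      calc δ n * psum k (n + 1) ≤ ‖ptrace e (C ∘L Z - Z ∘L C) (psum k (n + 1))‖ :=
            mul_psum_le_norm_ptrace e hk hδ hD n
        _ ≤ 2 * k (n + 1) * (‖C‖ * ‖Z‖) := norm_ptrace_commutator_le_of_or e hk hCZ n
        _ = 2 * (‖C‖ * ‖Z‖) * k (n + 1) := by ring
  exact exists_exp_le_of_mul_psum_le (hk 1 le_rfl) ha fun n => (le_div_iff₀ (hs n)).1 (hra n)
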